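/- The 8-dimensional Lebesgue volume of B′_O(0,r) = {x ∈ ℝ⁸ : max_{1≤i≤7} √(x₀²+xᵢ²) < r} equals 2⁸·∫₀^r (r²−t²)^{7/2} dt = 35π·r⁸, which is (24·35/π³) times the volume of the Euclidean 8-ball of radius r. -/

import Mathlib

/-!
Slicing at `x₀ = t`, the section of `B′_O(0,r)` is the cube `(-√(r² - t²), √(r² - t²))⁷`, so by
Fubini its volume is `∫_{-r}^{r} (2√(r² - t²))⁷ dt = 2⁸ ∫₀^r (r² - t²)^{7/2} dt`. The substitution
`t = r sin θ` turns this into `2⁸ r⁸ ∫₀^{π/2} cos⁸ θ dθ`, and the Wallis integral equals `35π/256`.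
-/

open MeasureTheory Real

/-- For `n = 2` this is the Steinmetz bicylinder; the paper's `B′_O(0,r)` is
`steinmetzSolid 7 r`. -/
def steinmetzSolid (n : ℕ) (r : ℝ) : Set (EuclideanSpace ℝ (Fin (n + 1))) :=
  {x | ∀ i : Fin n, √(x 0 ^ 2 + x i.succ ^ 2) < r}

theorem sqrt_sq_add_sq_lt_iff {r : ℝ} (hr : 0 ≤ r) (t y : ℝ) :
    √(t ^ 2 + y ^ 2) < r ↔ y ∈ Set.Ioo (-√(r ^ 2 - t ^ 2)) √(r ^ 2 - t ^ 2) := by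
  rw [Set.mem_Ioo, ← abs_lt, sqrt_lt (by positivity) hr, lt_sqrt (abs_nonneg y), sq_abs]
  constructor <;> intro h <;> linarith

theorem volume_steinmetzSolid {r : ℝ} (hr : 0 ≤ r) (n : ℕ) :
    volume (steinmetzSolid n r) = ∫⁻ t, ENNReal.ofReal (2 * √(r ^ 2 - t ^ 2)) ^ n := by
  set T : Set (ℝ × (Fin n → ℝ)) := {p | ∀ i, √(p.1 ^ 2 + p.2 i ^ 2) < r}
  have hT : MeasurableSet T := by
    simp only [T, Set.ofPred_forall]
    exact .iInter fun i => measurableSet_lt (by fun_prop) measurable_const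
  have hpres := (EuclideanSpace.volume_preserving_symm_measurableEquiv_toLp (Fin (n + 1))).trans
    (volume_preserving_piFinSuccAbove (fun _ : Fin (n + 1) => ℝ) 0)
  have hslice (t : ℝ) :
      Prod.mk t ⁻¹' T = Set.univ.pi fun _ => Set.Ioo (-√(r ^ 2 - t ^ 2)) √(r ^ 2 - t ^ 2) := by
    ext y
    simp [T, sqrt_sq_add_sq_lt_iff hr]
  calc volume (steinmetzSolid n r) = volume T := hpres.measure_preimage hT.nullMeasurableSet
    _ = ∫⁻ t, volume (Prod.mk t ⁻¹' T) := by rw [Measure.volume_eq_prod, Measure.prod_apply hT]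
    _ = ∫⁻ t, ENNReal.ofReal (2 * √(r ^ 2 - t ^ 2)) ^ n := by
      simp only [hslice, volume_pi_pi, Real.volume_Ioo, Finset.prod_const, Finset.card_univ,
        Fintype.card_fin, sub_neg_eq_add, ← two_mul]

open Set Interval in
theorem intervalIntegral.integral_neg_self_of_even {E : Type*} [NormedAddCommGroup E]
    [NormedSpace ℝ E] {f : ℝ → E} (hf : ∀ x, f (-x) = f x) {a : ℝ}
    (hfi : IntervalIntegrable f volume (-a) a) :
    ∫ x in -a..a, f x = (2 : ℝ) • ∫ x in 0..a, f x := by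
  have hzero : (0 : ℝ) ∈ [[-a, a]] := by
    rw [mem_uIcc]; by_cases ha : 0 ≤ a <;> [left; right] <;> constructor <;> linarith
  have hleft : ∫ x in -a..0, f x = ∫ x in 0..a, f x := by
    simpa [hf] using (intervalIntegral.integral_comp_neg (a := 0) (b := a) f).symm
  rw [← intervalIntegral.integral_add_adjacent_intervals
    (hfi.mono_set (uIcc_subset_uIcc left_mem_uIcc hzero))
    (hfi.mono_set (uIcc_subset_uIcc hzero right_mem_uIcc)), hleft, two_smul]

theorem integral_cos_pow_eight : ∫ x in 0..π / 2, cos x ^ 8 = 35 * π / 256 := by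
  rw [EulerSine.integral_cos_pow_eq, show 8 = 2 * 4 from rfl, integral_sin_pow_even]
  simp only [Finset.prod_range_succ, Finset.prod_range_zero]
  norm_num
  ring

theorem lintegral_ofReal_two_mul_sqrt_sq_sub_sq_pow {r : ℝ} (hr : 0 ≤ r) {n : ℕ} (hn : n ≠ 0) :
    ∫⁻ t, ENNReal.ofReal (2 * √(r ^ 2 - t ^ 2)) ^ n =
      ENNReal.ofReal (2 ^ (n + 1) * ∫ t in 0..r, √(r ^ 2 - t ^ 2) ^ n) := by
  set f : ℝ → ℝ := fun t => (2 * √(r ^ 2 - t ^ 2)) ^ n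
  have hf : Continuous f := by fun_prop
  have hsupp : (fun t => ENNReal.ofReal (f t)).support ⊆ Set.Ioc (-r) r := by
    intro t ht
    by_contra hout
    have : r ^ 2 - t ^ 2 ≤ 0 := by
      rw [Set.mem_Ioc, not_and_or, not_lt, not_le] at hout
      rcases hout with h | h <;> nlinarith
    simp [f, sqrt_eq_zero'.2 this, hn] at ht
  calc ∫⁻ t, ENNReal.ofReal (2 * √(r ^ 2 - t ^ 2)) ^ n
      = ∫⁻ t in Set.Ioc (-r) r, ENNReal.ofReal (f t) := by
        rw [setLIntegral_eq_of_support_subset hsupp]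
        exact lintegral_congr fun t => (ENNReal.ofReal_pow (by positivity) n).symm
    _ = ENNReal.ofReal (∫ t in -r..r, f t) := by
        rw [intervalIntegral.integral_of_le (by linarith), ofReal_integral_eq_lintegral_ofReal
          (hf.integrableOn_Icc.mono_set Set.Ioc_subset_Icc_self)
          (.of_forall fun t => by positivity)]
    _ = ENNReal.ofReal (2 ^ (n + 1) * ∫ t in 0..r, √(r ^ 2 - t ^ 2) ^ n) := by
        rw [intervalIntegral.integral_neg_self_of_even (by simp [f]) (hf.intervalIntegrable _ _)]
        simp only [f, mul_pow, intervalIntegral.integral_const_mul, smul_eq_mul]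
        ring_nf

theorem integral_sqrt_sq_sub_sq_pow {r : ℝ} (hr : 0 ≤ r) (n : ℕ) :
    ∫ t in 0..r, √(r ^ 2 - t ^ 2) ^ n = r ^ (n + 1) * ∫ θ in 0..π / 2, cos θ ^ (n + 1) := by
  have hsub := intervalIntegral.integral_comp_mul_deriv (a := 0) (b := π / 2)
    (f := fun θ => r * sin θ) (f' := fun θ => r * cos θ) (g := fun t => √(r ^ 2 - t ^ 2) ^ n)
    (fun θ _ => (hasDerivAt_sin θ).const_mul r) (by fun_prop) (by fun_prop)
  simp only [sin_zero, mul_zero, sin_pi_div_two, mul_one] at hsub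
  rw [← hsub, ← intervalIntegral.integral_const_mul]
  refine intervalIntegral.integral_congr fun θ hθ => ?_
  rw [Set.uIcc_of_le (by positivity)] at hθ
  have hcos : 0 ≤ cos θ :=
    cos_nonneg_of_mem_Icc ⟨by linarith [pi_pos, hθ.1], hθ.2⟩
  have hsq : r ^ 2 - (r * sin θ) ^ 2 = (r * cos θ) ^ 2 := by
    linear_combination r ^ 2 * (sin_sq_add_cos_sq θ).symm
  simp only [Function.comp_apply, hsq, sqrt_sq (mul_nonneg hr hcos)]
  ring

theorem EuclideanSpace.volume_ball_fin_eight {r : ℝ} (hr : 0 ≤ r) :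
    volume (Metric.ball (0 : EuclideanSpace ℝ (Fin 8)) r) =
      ENNReal.ofReal (π ^ 4 * r ^ 8 / 24) := by
  have hGamma : Gamma (8 / 2 + 1) = 24 := by
    rw [show (8 : ℝ) / 2 + 1 = 5 by norm_num, Gamma_ofNat_eq_factorial]; norm_num [Nat.factorial]
  rw [EuclideanSpace.volume_ball, Fintype.card_fin, ← ENNReal.ofReal_pow hr,
    ← ENNReal.ofReal_mul (by positivity), Nat.cast_ofNat, hGamma,
    show √π ^ 8 = π ^ 4 by rw [show 8 = 2 * 4 from rfl, pow_mul, sq_sqrt pi_pos.le]]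
  ring_nf

/-- The 8-dimensional Lebesgue volume of B′_O(0,r) = {x : max_{1≤i≤7} √(x₀²+xᵢ²) < r}
equals 2⁸·∫₀^r (r²−t²)^{7/2} dt = 35π·r⁸, which is (24·35/π³) times the volume of the
Euclidean 8-ball of radius r. -/
theorem volume_octonion_qn'_ball (r : ℝ) (hr : 0 < r) :
    volume {x : EuclideanSpace ℝ (Fin 8) |
        ∀ i : Fin 7, Real.sqrt (x 0 ^ 2 + x i.succ ^ 2) < r} =
      ENNReal.ofReal (2 ^ 8 * ∫ t in (0 : ℝ)..r, (r ^ 2 - t ^ 2) ^ ((7 : ℝ) / 2)) ∧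
    volume {x : EuclideanSpace ℝ (Fin 8) |
        ∀ i : Fin 7, Real.sqrt (x 0 ^ 2 + x i.succ ^ 2) < r} =
      ENNReal.ofReal (35 * π * r ^ 8) ∧
    volume {x : EuclideanSpace ℝ (Fin 8) |
        ∀ i : Fin 7, Real.sqrt (x 0 ^ 2 + x i.succ ^ 2) < r} =
      ENNReal.ofReal (24 * 35 / π ^ 3) * volume (Metric.ball (0 : EuclideanSpace ℝ (Fin 8)) r) := by
  have hvol : volume (steinmetzSolid 7 r) =
      ENNReal.ofReal (2 ^ 8 * ∫ t in (0 : ℝ)..r, √(r ^ 2 - t ^ 2) ^ 7) := by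
    rw [volume_steinmetzSolid hr.le,
      lintegral_ofReal_two_mul_sqrt_sq_sub_sq_pow hr.le (by norm_num)]
  have hrpow : ∫ t in (0 : ℝ)..r, √(r ^ 2 - t ^ 2) ^ 7 =
      ∫ t in (0 : ℝ)..r, (r ^ 2 - t ^ 2) ^ ((7 : ℝ) / 2) := by
    refine intervalIntegral.integral_congr fun t ht => ?_
    rw [Set.uIcc_of_le hr.le] at ht
    have : 0 ≤ r ^ 2 - t ^ 2 := by nlinarith [ht.1, ht.2]
    rw [rpow_div_two_eq_sqrt _ this, ← rpow_natCast]
    norm_num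
  have hwallis : ∫ t in (0 : ℝ)..r, √(r ^ 2 - t ^ 2) ^ 7 = 35 * π / 256 * r ^ 8 := by
    rw [integral_sqrt_sq_sub_sq_pow hr.le, integral_cos_pow_eight]
    ring
  change volume (steinmetzSolid 7 r) = _ ∧ volume (steinmetzSolid 7 r) = _ ∧
    volume (steinmetzSolid 7 r) = _
  refine ⟨by rw [hvol, hrpow], by rw [hvol, hwallis]; ring_nf, ?_⟩
  rw [hvol, hwallis, EuclideanSpace.volume_ball_fin_eight hr.le,
    ← ENNReal.ofReal_mul (by positivity)]
  congr 1
  field_simp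
  ring
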